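/- Let Ω ⊂ ℝ^N be a bounded domain with smooth boundary, β_Ω > 1 the smallest Dirichlet eigenvalue with positive eigenfunction φ_Ω, and let 1/β_Ω < τ < 1. Let ρ > 0 and c₃ > 0 be such that |∇φ_Ω|² ≥ c₃ on the tubular neighborhood Ω_ρ = {x ∈ Ω : dist(x, ∂Ω) < ρ}. Then for ε > 0 small enough that (ε + max_{Ω̄_ρ} φ_Ω)² ≤ τ(1−τ)c₃, the function ψ(x) = δ(φ_Ω(x) + ε)^τ satisfies Δψ + ψ − ψ^p ≤ 0 in Ω_ρ for every δ > 0 and every p > 1. -/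

import Mathlib

/-!
With `s = φΩ + ε`, the chain rule gives
`Δψ = δτ(τ-1) s^(τ-2) |∇φΩ|² + δτ s^(τ-1) ΔφΩ`. The second term is `≤ 0` since
`ΔφΩ = -βφΩ < 0`; as `τ < 1`, the first is `≤ -δτ(1-τ)c₃ s^(τ-2)`. Writing
`ψ = δ s^(τ-2) s²` gives `Δψ + ψ ≤ δ s^(τ-2) (s² - τ(1-τ)c₃) ≤ 0` because `s ≤ ε + Mρ`,
and `-ψ^p ≤ 0`.
-/

open MeasureTheory Real Filter Topology Metric

noncomputable section

/-- `ℝ^N`. -/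
abbrev Euc (N : ℕ) := EuclideanSpace ℝ (Fin N)

/-- The Laplacian `Δu = ∑ i ∂²u/∂xᵢ²`. -/
def lap {N : ℕ} (u : Euc N → ℝ) (x : Euc N) : ℝ :=
  ∑ i, fderiv ℝ (fun y => fderiv ℝ u y (EuclideanSpace.single i 1)) x (EuclideanSpace.single i 1)

theorem norm_gradient_sq_eq_sum {N : ℕ} (φ : Euc N → ℝ) (x : Euc N) :
    ‖gradient φ x‖ ^ 2 = ∑ i, fderiv ℝ φ x (EuclideanSpace.single i 1) ^ 2 := by
  rw [EuclideanSpace.real_norm_sq_eq]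
  congr 1 with i
  rw [← inner_gradient_left, EuclideanSpace.inner_single_right]
  simp

theorem fderiv_fderiv_comp_apply {E : Type*} [NormedAddCommGroup E] [NormedSpace ℝ E]
    {φ : E → ℝ} {f f' : ℝ → ℝ} {b : ℝ} {x : E} (hφ : ContDiffAt ℝ 2 φ x)
    (hf : ∀ᶠ t in 𝓝 (φ x), HasDerivAt f (f' t) t) (hf' : HasDerivAt f' b (φ x)) (v : E) :
    fderiv ℝ (fun y => fderiv ℝ (fun z => f (φ z)) y v) x v
      = b * fderiv ℝ φ x v ^ 2 + f' (φ x) * fderiv ℝ (fun y => fderiv ℝ φ y v) x v := by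
  have hφx : DifferentiableAt ℝ φ x := hφ.differentiableAt two_ne_zero
  have hchain : (fun y => fderiv ℝ (fun z => f (φ z)) y v)
      =ᶠ[𝓝 x] fun y => f' (φ y) * fderiv ℝ φ y v := by
    filter_upwards [hφ.eventually (by simp), hφ.continuousAt.eventually hf] with y hy hfy
    have hcomp : HasFDerivAt (fun z => f (φ z)) (f' (φ y) • fderiv ℝ φ y) y :=
      hfy.comp_hasFDerivAt y (hy.differentiableAt two_ne_zero).hasFDerivAt
    rw [hcomp.fderiv, smul_apply, smul_eq_mul]
  have hf'φ : HasFDerivAt (fun y => f' (φ y)) (b • fderiv ℝ φ x) x :=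
    hf'.comp_hasFDerivAt x hφx.hasFDerivAt
  have hDφv : DifferentiableAt ℝ (fun y => fderiv ℝ φ y v) x :=
    ((hφ.fderiv_right le_rfl).differentiableAt one_ne_zero).clm_apply
      (differentiableAt_const v)
  rw [hchain.fderiv_eq, fderiv_fun_mul hf'φ.differentiableAt hDφv, hf'φ.fderiv]
  simp only [add_apply, smul_apply, smul_eq_mul]
  ring

theorem lap_comp {N : ℕ} {φ : Euc N → ℝ} {f f' : ℝ → ℝ} {b : ℝ} {x : Euc N}
    (hφ : ContDiffAt ℝ 2 φ x) (hf : ∀ᶠ t in 𝓝 (φ x), HasDerivAt f (f' t) t)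
    (hf' : HasDerivAt f' b (φ x)) :
    lap (fun y => f (φ y)) x = b * ‖gradient φ x‖ ^ 2 + f' (φ x) * lap φ x := by
  simp only [lap, fderiv_fderiv_comp_apply hφ hf hf', Finset.sum_add_distrib,
    norm_gradient_sq_eq_sum, Finset.mul_sum]

theorem hasDerivAt_mul_add_rpow {δ ε τ t : ℝ} (ht : t + ε ≠ 0) :
    HasDerivAt (fun t => δ * (t + ε) ^ τ) (δ * τ * (t + ε) ^ (τ - 1)) t := by
  simpa [mul_assoc] using
    ((Real.hasDerivAt_rpow_const (p := τ) (Or.inl ht)).comp t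
      ((hasDerivAt_id t).add_const ε)).const_mul δ

theorem lap_mul_add_rpow {N : ℕ} {φ : Euc N → ℝ} {x : Euc N} (δ τ : ℝ) {ε : ℝ}
    (hφ : ContDiffAt ℝ 2 φ x) (hs : 0 < φ x + ε) :
    lap (fun y => δ * (φ y + ε) ^ τ) x
      = δ * τ * (τ - 1) * (φ x + ε) ^ (τ - 2) * ‖gradient φ x‖ ^ 2
        + δ * τ * (φ x + ε) ^ (τ - 1) * lap φ x := by
  have hf : ∀ᶠ t in 𝓝 (φ x), HasDerivAt (fun t => δ * (t + ε) ^ τ)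
      (δ * τ * (t + ε) ^ (τ - 1)) t := by
    filter_upwards [eventually_gt_nhds (show -ε < φ x by linarith)] with t ht
    exact hasDerivAt_mul_add_rpow (by linarith)
  have hf' := hasDerivAt_mul_add_rpow (δ := δ * τ) (τ := τ - 1) hs.ne'
  rw [show τ - 1 - 1 = τ - 2 by ring] at hf'
  exact lap_comp hφ hf hf'

theorem lap_mul_add_rpow_add_le {N : ℕ} {φ : Euc N → ℝ} {x : Euc N} {δ τ ε c : ℝ}
    (hφ : ContDiffAt ℝ 2 φ x) (hδ : 0 ≤ δ) (hτ₀ : 0 < τ) (hτ₁ : τ < 1) (hs : 0 < φ x + ε)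
    (hgrad : c ≤ ‖gradient φ x‖ ^ 2) (hlap : lap φ x ≤ 0) :
    lap (fun y => δ * (φ y + ε) ^ τ) x + δ * (φ x + ε) ^ τ
      ≤ δ * (φ x + ε) ^ (τ - 2) * ((φ x + ε) ^ 2 - τ * (1 - τ) * c) := by
  rw [lap_mul_add_rpow δ τ hφ hs]
  set s := φ x + ε
  have hpow : s ^ τ = s ^ (τ - 2) * s ^ 2 := by
    rw [← Real.rpow_natCast s 2, ← Real.rpow_add hs]; norm_num
  have hgradient_term : 0 ≤ δ * τ * (1 - τ) * s ^ (τ - 2) * (‖gradient φ x‖ ^ 2 - c) := by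
    have : 0 < 1 - τ := by linarith
    have : 0 ≤ ‖gradient φ x‖ ^ 2 - c := by linarith
    positivity
  have hlap_term : δ * τ * s ^ (τ - 1) * lap φ x ≤ 0 :=
    mul_nonpos_of_nonneg_of_nonpos (by positivity) hlap
  rw [hpow]
  linarith

theorem stmt14_general {N : ℕ} (Ω : Set (Euc N)) (hΩo : IsOpen Ω)
    (β τ ρ c₃ ε Mρ : ℝ) (hβ : 1 < β) (hτl : 1 / β < τ) (hτu : τ < 1)
    (hε : 0 < ε)
    (φΩ : Euc N → ℝ)
    -- φΩ is the positive first Dirichlet eigenfunction with eigenvalue β = β_Ω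
    (hφpos : ∀ x ∈ Ω, 0 < φΩ x)
    (hφeig : ∀ x ∈ Ω, -lap φΩ x = β * φΩ x)
    (hφreg : ContDiffOn ℝ 2 φΩ (closure Ω))
    -- |∇φΩ|² ≥ c₃ on the tubular neighborhood Ω_ρ
    (hgrad : ∀ x ∈ Ω, infDist x (frontier Ω) < ρ → c₃ ≤ ‖gradient φΩ x‖ ^ 2)
    -- Mρ bounds φΩ on the closure of Ω_ρ
    (hMρ : ∀ x ∈ closure {x | x ∈ Ω ∧ infDist x (frontier Ω) < ρ}, φΩ x ≤ Mρ)
    -- smallness of ε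
    (hsmall : (ε + Mρ) ^ 2 ≤ τ * (1 - τ) * c₃) :
    ∀ δ : ℝ, 0 < δ → ∀ p : ℝ, 1 < p → ∀ x ∈ Ω, infDist x (frontier Ω) < ρ →
      lap (fun y => δ * (φΩ y + ε) ^ τ) x + δ * (φΩ x + ε) ^ τ
        - (δ * (φΩ x + ε) ^ τ) ^ p ≤ 0 := by
  intro δ hδ p _ x hx hxρ
  have hτ : 0 < τ := lt_trans (by positivity) hτl
  have hs : 0 < φΩ x + ε := by linarith [hφpos x hx]
  have hφ : ContDiffAt ℝ 2 φΩ x :=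
    hφreg.contDiffAt (mem_of_superset (hΩo.mem_nhds hx) subset_closure)
  have hlap : lap φΩ x ≤ 0 := by nlinarith [hφeig x hx, hφpos x hx]
  have hsq : (φΩ x + ε) ^ 2 ≤ τ * (1 - τ) * c₃ :=
    (pow_le_pow_left₀ hs.le (by linarith [hMρ x (subset_closure ⟨hx, hxρ⟩)]) 2).trans hsmall
  have hbound := lap_mul_add_rpow_add_le hφ hδ.le hτ hτu hs (hgrad x hx hxρ) hlap
  have hneg : δ * (φΩ x + ε) ^ (τ - 2) * ((φΩ x + ε) ^ 2 - τ * (1 - τ) * c₃) ≤ 0 :=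
    mul_nonpos_of_nonneg_of_nonpos (by positivity) (by linarith)
  have hψp : 0 ≤ (δ * (φΩ x + ε) ^ τ) ^ p := by positivity
  linarith

/-- with `β_Ω > 1`, `1/β_Ω < τ < 1`, `|∇φΩ|² ≥ c₃` on the tubular
neighborhood `Ω_ρ = {x ∈ Ω : dist(x,∂Ω) < ρ}`, and `ε > 0` with
`(ε + max_{Ω̄_ρ} φΩ)² ≤ τ(1−τ)c₃`, the function `ψ = δ(φΩ + ε)^τ` satisfies
`Δψ + ψ − ψ^p ≤ 0` in `Ω_ρ` for every `δ > 0` and `p > 1`. -/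
theorem stmt14 {N : ℕ} (Ω : Set (Euc N)) (hΩo : IsOpen Ω) (hΩc : IsConnected Ω)
    (hΩb : Bornology.IsBounded Ω)
    (β τ ρ c₃ ε Mρ : ℝ) (hβ : 1 < β) (hτl : 1 / β < τ) (hτu : τ < 1)
    (hρ : 0 < ρ) (hc₃ : 0 < c₃) (hε : 0 < ε)
    (φΩ : Euc N → ℝ)
    -- φΩ is the positive first Dirichlet eigenfunction with eigenvalue β = β_Ω
    (hφpos : ∀ x ∈ Ω, 0 < φΩ x)
    (hφbdry : ∀ x ∈ frontier Ω, φΩ x = 0)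
    (hφeig : ∀ x ∈ Ω, -lap φΩ x = β * φΩ x)
    (hφreg : ContDiffOn ℝ 2 φΩ (closure Ω))
    -- |∇φΩ|² ≥ c₃ on the tubular neighborhood Ω_ρ
    (hgrad : ∀ x ∈ Ω, infDist x (frontier Ω) < ρ → c₃ ≤ ‖gradient φΩ x‖ ^ 2)
    -- Mρ bounds φΩ on the closure of Ω_ρ
    (hMρ : ∀ x ∈ closure {x | x ∈ Ω ∧ infDist x (frontier Ω) < ρ}, φΩ x ≤ Mρ)
    (hMρ0 : 0 ≤ Mρ)
    -- smallness of ε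
    (hsmall : (ε + Mρ) ^ 2 ≤ τ * (1 - τ) * c₃) :
    ∀ δ : ℝ, 0 < δ → ∀ p : ℝ, 1 < p → ∀ x ∈ Ω, infDist x (frontier Ω) < ρ →
      lap (fun y => δ * (φΩ y + ε) ^ τ) x + δ * (φΩ x + ε) ^ τ
        - (δ * (φΩ x + ε) ^ τ) ^ p ≤ 0 :=
  stmt14_general Ω hΩo β τ ρ c₃ ε Mρ hβ hτl hτu hε φΩ hφpos hφeig hφreg hgrad hMρ hsmall
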